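/- Let Φ₁, Φ₂ : A₂ → A₁ be algebra homomorphisms, K : span(C₂) → A₁ a ℤ-linear map on the span of generators, and Ω : A₂ → A₁ the ℤ-linear map defined on words by Ω(c₁⋯c_m) = Σ_{j=1}^m Φ₁(c₁⋯c_{j-1}) K(c_j) Φ₂(c_{j+1}⋯c_m). Let ε₁ be an augmentation of A₁ with ε₁ ∘ Φ₁ = ε₁ ∘ Φ₂ =: ε₂, and define Ω^{ε₁}(c₁⋯c_m) := Σ_{j=1}^m Φ₁^{ε₁}(c₁⋯c_{j-1}) K^{ε₁}(c_j) Φ₂^{ε₁}(c_{j+1}⋯c_m), where Φᵢ^{ε₁} = φ^{ε₁}∘Φᵢ∘φ^{-ε₂} and K^{ε₁} = φ^{ε₁}∘K∘φ^{-ε₂}. Then Ω^{ε₁} = φ^{ε₁} ∘ Ω ∘ φ^{-ε₂}. -/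

import Mathlib

/-- The free `ℤ`-algebra on a type `C`, realized as the monoid algebra of the free
monoid, so that the word-length decomposition is manifest. -/
abbrev FA (C : Type*) := MonoidAlgebra ℤ (FreeMonoid C)

/-- The generator `c` as an element of the free algebra. -/
noncomputable def gen {C : Type*} (c : C) : FA C :=
  MonoidAlgebra.of ℤ (FreeMonoid C) (FreeMonoid.of c)

/-- The projection `π_k` onto the span of words of length `k`. -/
noncomputable def proj {C : Type*} (k : ℕ) : FA C →ₗ[ℤ] FA C :=
  (MonoidAlgebra.coeffLinearEquiv ℤ).symm.toLinearMap ∘ₗ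
  Finsupp.lsum ℤ (fun w : FreeMonoid C =>
    if (FreeMonoid.toList w).length = k then (Finsupp.lsingle w : ℤ →ₗ[ℤ] (FreeMonoid C →₀ ℤ)) else 0)
    ∘ₗ (MonoidAlgebra.coeffLinearEquiv ℤ).toLinearMap

/-- The algebra homomorphism determined by a function on generators. -/
noncomputable def algOf {C A : Type*} [Semiring A] [Algebra ℤ A] (g : C → A) :
    FA C →ₐ[ℤ] A :=
  (MonoidAlgebra.lift ℤ A (FreeMonoid C)) (FreeMonoid.lift g)

/-- `φ^ε`, sending each generator `c` to `c + ε(c)·1`. -/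
noncomputable def phiP {C : Type*} (ε : FA C →ₐ[ℤ] ℤ) : FA C →ₐ[ℤ] FA C :=
  algOf (fun c => gen c + algebraMap ℤ (FA C) (ε (gen c)))

/-- `φ^{-ε}`, sending each generator `c` to `c - ε(c)·1`. -/
noncomputable def phiM {C : Type*} (ε : FA C →ₐ[ℤ] ℤ) : FA C →ₐ[ℤ] FA C :=
  algOf (fun c => gen c - algebraMap ℤ (FA C) (ε (gen c)))

/-- The word `c₁ ⋯ c_m` associated to a list of generators. -/
noncomputable def wordProd {C : Type*} (l : List C) : FA C := (l.map gen).prod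

/-- The `ℤ`-linear map `Ω` determined on words by
`Ω(c₁⋯c_m) = Σ_{j=1}^m f₁(c₁⋯c_{j-1}) kf(c_j) f₂(c_{j+1}⋯c_m)`. -/
noncomputable def omegaMap {C₁ C₂ : Type*} (f₁ f₂ : FA C₂ →ₐ[ℤ] FA C₁)
    (kf : C₂ → FA C₁) : FA C₂ →ₗ[ℤ] FA C₁ :=
  (Finsupp.linearCombination ℤ (fun w : FreeMonoid C₂ =>
    ∑ i : Fin (FreeMonoid.toList w).length,
      f₁ (wordProd ((FreeMonoid.toList w).take i)) *
        kf ((FreeMonoid.toList w).get i) *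
          f₂ (wordProd ((FreeMonoid.toList w).drop (i + 1)))))
    ∘ₗ (MonoidAlgebra.coeffLinearEquiv ℤ).toLinearMap

/-!
`Ω` is the unique `ℤ`-linear map with `Ω(xy) = Ω(x) Φ₂(y) + Φ₁(x) Ω(y)` (a `(Φ₁, Φ₂)`-twisted
derivation) taking the value `K(c)` on each generator `c`, since the free algebra is generated by
its generators. Conjugating by the algebra maps `φ^{ε₁}` and `φ^{-ε₂}` turns it into a
`(Φ₁^{ε₁}, Φ₂^{ε₁})`-twisted derivation, and on a generator it gives
`φ^{ε₁} Ω(c - ε₂(c)) = φ^{ε₁} K(c) = φ^{ε₁} K(c - ε₂(c)) = K^{ε₁}(c)`, because both `Ω` and `K`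
vanish on constants. So it agrees with `Ω^{ε₁}` by uniqueness.
-/

section TwistedDerivation

variable {k R A B : Type*} [CommSemiring k] [Semiring R] [Semiring A] [Semiring B]
  [Algebra k R] [Algebra k A] [Algebra k B]

def IsTwistedDerivation (f₁ f₂ : R →ₐ[k] A) (D : R →ₗ[k] A) : Prop :=
  ∀ x y, D (x * y) = D x * f₂ y + f₁ x * D y

variable {f₁ f₂ : R →ₐ[k] A} {D : R →ₗ[k] A}

theorem IsTwistedDerivation.comp (hD : IsTwistedDerivation f₁ f₂ D) (g : A →ₐ[k] B)
    {S : Type*} [Semiring S] [Algebra k S] (h : S →ₐ[k] R) :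
    IsTwistedDerivation (g.comp (f₁.comp h)) (g.comp (f₂.comp h))
      (g.toLinearMap ∘ₗ D ∘ₗ h.toLinearMap) := fun x y => by
  simp [hD _ _]

theorem IsTwistedDerivation.map_one [IsLeftCancelAdd A] (hD : IsTwistedDerivation f₁ f₂ D) :
    D 1 = 0 := by
  simpa using hD 1 1

end TwistedDerivation

section FreeAlgebra

variable {C : Type*}

theorem algOf_gen {A : Type*} [Semiring A] [Algebra ℤ A] (g : C → A) (c : C) :
    algOf g (gen c) = g c := by
  simp [algOf, gen]

theorem phiM_gen (ε : FA C →ₐ[ℤ] ℤ) (c : C) :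
    phiM ε (gen c) = gen c - algebraMap ℤ (FA C) (ε (gen c)) :=
  algOf_gen _ c

theorem map_phiM_gen {M : Type*} [AddCommGroup M] (D : FA C →ₗ[ℤ] M) (hD : D 1 = 0)
    (ε : FA C →ₐ[ℤ] ℤ) (c : C) : D (phiM ε (gen c)) = D (gen c) := by
  rw [phiM_gen, map_sub, Algebra.algebraMap_eq_smul_one, map_smul, hD, smul_zero, sub_zero]

theorem wordProd_nil : wordProd ([] : List C) = 1 := rfl

theorem wordProd_cons (c : C) (l : List C) : wordProd (c :: l) = gen c * wordProd l :=
  List.prod_cons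

theorem wordProd_toList (w : FreeMonoid C) :
    wordProd w.toList = MonoidAlgebra.of ℤ (FreeMonoid C) w := by
  induction w using FreeMonoid.inductionOn' with
  | one => exact (map_one _).symm
  | of_mul c w ih => rw [FreeMonoid.toList_of_mul, wordProd_cons, ih, map_mul, gen]

theorem FA.induction_on {motive : FA C → Prop} (x : FA C) (one : motive 1)
    (gen_mul : ∀ c x, motive x → motive (gen c * x))
    (add : ∀ x y, motive x → motive y → motive (x + y))
    (smul : ∀ (r : ℤ) x, motive x → motive (r • x)) : motive x := by
  induction x using MonoidAlgebra.induction_on with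
  | of w =>
    induction w using FreeMonoid.inductionOn' with
    | one => rwa [map_one]
    | of_mul c w ih => rw [map_mul]; exact gen_mul c _ ih
  | add x y hx hy => exact add x y hx hy
  | smul r x hx => exact smul r x hx

theorem IsTwistedDerivation.ext {A : Type*} [Semiring A] [Algebra ℤ A] [IsLeftCancelAdd A]
    {f₁ f₂ : FA C →ₐ[ℤ] A} {D D' : FA C →ₗ[ℤ] A}
    (hD : IsTwistedDerivation f₁ f₂ D) (hD' : IsTwistedDerivation f₁ f₂ D')
    (h : ∀ c, D (gen c) = D' (gen c)) : D = D' := by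
  refine LinearMap.ext fun x => ?_
  induction x using FA.induction_on with
  | one => rw [hD.map_one, hD'.map_one]
  | gen_mul c x hx => rw [hD, hD', h, hx]
  | add x y hx hy => rw [map_add, map_add, hx, hy]
  | smul r x hx => rw [map_smul, map_smul, hx]

end FreeAlgebra

section Omega

variable {C₁ C₂ : Type*} (f₁ f₂ : FA C₂ →ₐ[ℤ] FA C₁) (kf : C₂ → FA C₁)

theorem omegaMap_of (w : FreeMonoid C₂) :
    omegaMap f₁ f₂ kf (MonoidAlgebra.of ℤ _ w) =
      ∑ i : Fin w.toList.length, f₁ (wordProd (w.toList.take i)) * kf (w.toList.get i) *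
        f₂ (wordProd (w.toList.drop (i + 1))) := by
  simp [omegaMap]

theorem omegaMap_one : omegaMap f₁ f₂ kf 1 = 0 := by
  rw [← map_one (MonoidAlgebra.of ℤ (FreeMonoid C₂)), omegaMap_of]
  rfl

theorem omegaMap_gen_mul (c : C₂) (x : FA C₂) :
    omegaMap f₁ f₂ kf (gen c * x) = kf c * f₂ x + f₁ (gen c) * omegaMap f₁ f₂ kf x := by
  induction x using MonoidAlgebra.induction_on with
  | of w =>
    have hword : gen c * MonoidAlgebra.of ℤ _ w = MonoidAlgebra.of ℤ _ (FreeMonoid.of c * w) :=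
      (map_mul _ _ _).symm
    rw [hword, omegaMap_of, omegaMap_of, FreeMonoid.toList_of_mul, Finset.mul_sum]
    refine (Fin.sum_univ_succ (n := w.toList.length) _).trans ?_
    simp [wordProd_toList, wordProd_cons, wordProd_nil, mul_assoc]
  | add x y hx hy => simp only [mul_add, map_add, hx, hy]; abel
  | smul r x hx => simp only [mul_smul_comm, map_smul, hx, smul_add]

theorem omegaMap_gen (c : C₂) : omegaMap f₁ f₂ kf (gen c) = kf c := by
  simpa [omegaMap_one] using omegaMap_gen_mul f₁ f₂ kf c 1

theorem isTwistedDerivation_omegaMap : IsTwistedDerivation f₁ f₂ (omegaMap f₁ f₂ kf) := by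
  intro x y
  induction x using FA.induction_on with
  | one => simp [omegaMap_one]
  | gen_mul c x hx =>
    simp only [mul_assoc, omegaMap_gen_mul, hx, map_mul, mul_add, add_mul]
    abel
  | add x x' hx hx' => simp only [add_mul, map_add, hx, hx']; abel
  | smul r x hx => simp only [smul_mul_assoc, map_smul, hx, smul_add]

end Omega

theorem stmt_11_general {C₁ C₂ : Type*}
    (Φ₁ Φ₂ : FA C₂ →ₐ[ℤ] FA C₁)
    (K : FA C₂ →ₗ[ℤ] FA C₁) (hK : K 1 = 0)
    (ε₁ : FA C₁ →ₐ[ℤ] ℤ) :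
    omegaMap ((phiP ε₁).comp (Φ₁.comp (phiM (ε₁.comp Φ₁))))
        ((phiP ε₁).comp (Φ₂.comp (phiM (ε₁.comp Φ₁))))
        (fun c => phiP ε₁ (K (phiM (ε₁.comp Φ₁) (gen c)))) =
      (phiP ε₁).toLinearMap ∘ₗ
        (omegaMap Φ₁ Φ₂ (fun c => K (gen c))) ∘ₗ (phiM (ε₁.comp Φ₁)).toLinearMap := by
  have hΩ := isTwistedDerivation_omegaMap Φ₁ Φ₂ (fun c => K (gen c))
  refine (isTwistedDerivation_omegaMap _ _ _).ext (hΩ.comp _ _) fun c => ?_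
  rw [omegaMap_gen, LinearMap.comp_apply, LinearMap.comp_apply, AlgHom.toLinearMap_apply,
    AlgHom.toLinearMap_apply, map_phiM_gen K hK, map_phiM_gen _ (omegaMap_one _ _ _), omegaMap_gen]

/-- `Ω^{ε₁} = φ^{ε₁} ∘ Ω ∘ φ^{-ε₂}`: the augmented homotopy operator, defined on words
via the augmented maps `Φᵢ^{ε₁} = φ^{ε₁}∘Φᵢ∘φ^{-ε₂}` and `K^{ε₁} = φ^{ε₁}∘K∘φ^{-ε₂}`,
agrees with the conjugate of `Ω` by the augmentation automorphisms. Here `K` is the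
linear extension of a map on the span of generators with `K(1) = 0`. -/
theorem stmt_11 {C₁ C₂ : Type*}
    (Φ₁ Φ₂ : FA C₂ →ₐ[ℤ] FA C₁)
    (K : FA C₂ →ₗ[ℤ] FA C₁) (hK : K 1 = 0)
    (ε₁ : FA C₁ →ₐ[ℤ] ℤ) (hε : ε₁.comp Φ₁ = ε₁.comp Φ₂) :
    omegaMap ((phiP ε₁).comp (Φ₁.comp (phiM (ε₁.comp Φ₁))))
        ((phiP ε₁).comp (Φ₂.comp (phiM (ε₁.comp Φ₁))))
        (fun c => phiP ε₁ (K (phiM (ε₁.comp Φ₁) (gen c)))) =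
      (phiP ε₁).toLinearMap ∘ₗ
        (omegaMap Φ₁ Φ₂ (fun c => K (gen c))) ∘ₗ (phiM (ε₁.comp Φ₁)).toLinearMap :=
  stmt_11_general Φ₁ Φ₂ K hK ε₁
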